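/- arXiv:1205.0929 — 4 statements merged into one kernel-verified Lean document; each statement's English description precedes it below -/
import Mathlib

section
/- With G_n defined as a sequence of HNN-type amalgams of surface groups H_i (where H_i = ⟨c_i, d_i, a_i, b_i | c_i d_i [a_i,b_i]=1⟩ and d_j^{t_j} = c_{j+1}), for each 0 ≤ i ≤ n the subgroup H_i is a free factor of G_n. -/
/-- Generators of `Gₙ`: quadruples `aᵢ, bᵢ, cᵢ, dᵢ` for `0 ≤ i ≤ n`
(encoded as `Fin (n+1) × Fin 4`) together with stable letters `tⱼ` for `0 ≤ j ≤ n-1`. -/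
def GGen (n : ℕ) : Type := (Fin (n + 1) × Fin 4) ⊕ Fin n

open scoped commutatorElement

/-- The relations of `Gₙ`: `cᵢ dᵢ [aᵢ, bᵢ] = 1` for `0 ≤ i ≤ n` and
`tⱼ⁻¹ dⱼ tⱼ = c_{j+1}` for `0 ≤ j ≤ n - 1`. -/
def GRels (n : ℕ) : Set (FreeGroup (GGen n)) :=
  {r | (∃ i : Fin (n + 1),
          r = FreeGroup.of ((Sum.inl (i, 2)) : GGen n) * FreeGroup.of ((Sum.inl (i, 3)) : GGen n) *
              ⁅FreeGroup.of ((Sum.inl (i, 0)) : GGen n), FreeGroup.of ((Sum.inl (i, 1)) : GGen n)⁆) ∨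
       (∃ j : Fin n,
          r = (FreeGroup.of ((Sum.inr j) : GGen n))⁻¹ * FreeGroup.of ((Sum.inl (j.castSucc, 3)) : GGen n) *
              FreeGroup.of ((Sum.inr j) : GGen n) * (FreeGroup.of ((Sum.inl (j.succ, 2)) : GGen n))⁻¹)}

/-- The group `Gₙ`, obtained by gluing the surface groups
`Hᵢ = ⟨cᵢ, dᵢ, aᵢ, bᵢ ∣ cᵢ dᵢ [aᵢ, bᵢ] = 1⟩`, `0 ≤ i ≤ n`,
along boundary curves via `dⱼ^{tⱼ} = c_{j+1}`, `0 ≤ j ≤ n-1`. -/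
abbrev GGrp (n : ℕ) : Type := PresentedGroup (GRels n)

/-- The generator `aᵢ` of `Gₙ`. -/
def Ga (n : ℕ) (i : Fin (n + 1)) : GGrp n := PresentedGroup.of ((Sum.inl (i, 0)) : GGen n)

/-- The generator `bᵢ` of `Gₙ`. -/
def Gb (n : ℕ) (i : Fin (n + 1)) : GGrp n := PresentedGroup.of ((Sum.inl (i, 1)) : GGen n)

/-- The generator `cᵢ` of `Gₙ`. -/
def Gc (n : ℕ) (i : Fin (n + 1)) : GGrp n := PresentedGroup.of ((Sum.inl (i, 2)) : GGen n)

/-- The generator `dᵢ` of `Gₙ`. -/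
def Gd (n : ℕ) (i : Fin (n + 1)) : GGrp n := PresentedGroup.of ((Sum.inl (i, 3)) : GGen n)

/-- The stable letter `tⱼ` of `Gₙ`. -/
def Gt (n : ℕ) (j : Fin n) : GGrp n := PresentedGroup.of ((Sum.inr j) : GGen n)

/-- The canonical copy of the surface group `Hᵢ` inside `Gₙ`,
generated by `aᵢ, bᵢ, cᵢ, dᵢ`. -/
def Hsub (n : ℕ) (i : Fin (n + 1)) : Subgroup (GGrp n) :=
  Subgroup.closure {Ga n i, Gb n i, Gc n i, Gd n i}

/-- `G` is the internal free product of its subgroups `A` and `B`. -/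
def IsFreeProd {G : Type*} [Group G] (A B : Subgroup G) : Prop :=
  Function.Bijective (Monoid.Coprod.lift A.subtype B.subtype)

/-- `A` is a free factor of `G`. -/
def IsFreeFactor {G : Type*} [Group G] (A : Subgroup G) : Prop :=
  ∃ B : Subgroup G, IsFreeProd A B

/-- `G` is the internal free product of its subgroups `A`, `B` and `C`. -/
def IsFreeProd3 {G : Type*} [Group G] (A B C : Subgroup G) : Prop :=
  Function.Bijective (Monoid.CoprodI.lift (fun i : Fin 3 => (![A, B, C] i).subtype))

/-! The relation `cⱼ dⱼ [aⱼ, bⱼ] = 1` expresses `dⱼ` through `aⱼ, bⱼ, cⱼ`, and then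
`tⱼ⁻¹ dⱼ tⱼ = cⱼ₊₁` expresses `cⱼ₊₁` through `aⱼ, bⱼ, tⱼ, cⱼ` and, invertibly, `cⱼ` through
`aⱼ, bⱼ, tⱼ, cⱼ₊₁`. Starting from `cᵢ` and walking up and down, every generator becomes a word
in `aⱼ, bⱼ, tⱼ, cᵢ`, and these words satisfy no relation: `Gₙ` is free on them. `Hᵢ` is generated
by the basis elements `aᵢ, bᵢ, cᵢ`, and the remaining basis elements generate a complement. -/

open Subgroup

theorem FreeGroupBasis.isFreeProd_closure_image {ι G : Type*} [Group G]
    (b : FreeGroupBasis ι G) (s : Set ι) :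
    IsFreeProd (closure (b '' s)) (closure (b '' sᶜ)) := by
  classical
  set A := closure (b '' s)
  set B := closure (b '' sᶜ)
  let split : G →* Monoid.Coprod A B := b.lift fun x =>
    if hx : x ∈ s then .inl ⟨b x, subset_closure ⟨x, hx, rfl⟩⟩
    else .inr ⟨b x, subset_closure ⟨x, hx, rfl⟩⟩
  refine (MonoidHom.toMulEquiv (Monoid.Coprod.lift A.subtype B.subtype) split ?_ ?_).bijective
  · apply Monoid.Coprod.hom_ext <;>
    · refine MonoidHom.eq_of_eqOn_dense closure_closure_coe_preimage ?_
      rintro ⟨_, _⟩ ⟨x, hx, rfl⟩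
      simp_all [split]
  · exact b.ext_hom _ _ fun x => by by_cases hx : x ∈ s <;> simp [split, hx]

section PermSeq

variable {X Y : Type*} {n : ℕ} (f : Fin n → Equiv.Perm X)

def permChain : Fin (n + 1) → Equiv.Perm X :=
  Fin.induction 1 fun j σ => f j * σ

def permSeq (i : Fin (n + 1)) (x : X) (j : Fin (n + 1)) : X :=
  permChain f j ((permChain f i)⁻¹ x)

variable {f}

theorem permSeq_self (i : Fin (n + 1)) (x : X) : permSeq f i x i = x :=
  Equiv.apply_symm_apply _ x

theorem permSeq_succ (i : Fin (n + 1)) (x : X) (j : Fin n) :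
    permSeq f i x j.succ = f j (permSeq f i x j.castSucc) := by
  simp [permSeq, permChain, Equiv.Perm.mul_apply]

theorem eq_permSeq {s : Fin (n + 1) → X} (hs : ∀ j, s j.succ = f j (s j.castSucc))
    (i : Fin (n + 1)) : s = permSeq f i (s i) := by
  have hchain : ∀ j, s j = permChain f j (s 0) := by
    refine Fin.induction (by simp [permChain]) fun j ih => ?_
    rw [hs, ih]
    simp [permChain, Equiv.Perm.mul_apply]
  ext j
  rw [permSeq, hchain i, hchain j]
  exact congrArg _ (Equiv.symm_apply_apply _ _).symm

theorem map_permSeq {g : Fin n → Equiv.Perm Y} {h : X → Y}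
    (hfg : ∀ j x, h (f j x) = g j (h x)) (i : Fin (n + 1)) (x : X) (j : Fin (n + 1)) :
    h (permSeq f i x j) = permSeq g i (h x) j := by
  have hs := eq_permSeq (f := g) (s := fun j => h (permSeq f i x j))
    (fun j => by simp only [permSeq_succ, hfg]) i
  rw [congrFun hs j, permSeq_self]

end PermSeq

/-- With `k = [aⱼ, bⱼ]`, the relations of `Gₙ` say that `boundaryTwist tⱼ k` maps `cⱼ` to `cⱼ₊₁`. -/
def boundaryTwist {G : Type*} [Group G] (t k : G) : Equiv.Perm G :=
  ((Equiv.mulLeft k).trans (Equiv.inv G)).trans (MulAut.conj t⁻¹).toEquiv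

theorem boundaryTwist_apply {G : Type*} [Group G] (t k x : G) :
    boundaryTwist t k x = t⁻¹ * (k * x)⁻¹ * t := by
  simp [boundaryTwist]

theorem map_boundaryTwist {G H : Type*} [Group G] [Group H] (φ : G →* H) (t k x : G) :
    φ (boundaryTwist t k x) = boundaryTwist (φ t) (φ k) (φ x) := by
  simp only [boundaryTwist_apply, map_mul, map_inv]

section Relations

variable (n : ℕ)

theorem Gc_mul_Gd_mul_commutator (j : Fin (n + 1)) :
    Gc n j * Gd n j * ⁅Ga n j, Gb n j⁆ = 1 :=
  PresentedGroup.one_of_mem (Or.inl ⟨j, rfl⟩)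

theorem Gt_inv_mul_Gd_mul_Gt (j : Fin n) :
    (Gt n j)⁻¹ * Gd n j.castSucc * Gt n j = Gc n j.succ :=
  PresentedGroup.mk_eq_mk_of_mul_inv_mem (Or.inr ⟨j, rfl⟩)

theorem Gd_eq (j : Fin (n + 1)) : Gd n j = (⁅Ga n j, Gb n j⁆ * Gc n j)⁻¹ := by
  refine eq_inv_of_mul_eq_one_left ?_
  rw [← mul_assoc, mul_eq_one_comm, ← mul_assoc]
  exact Gc_mul_Gd_mul_commutator n j

theorem Gc_succ (j : Fin n) :
    Gc n j.succ = boundaryTwist (Gt n j) ⁅Ga n j.castSucc, Gb n j.castSucc⁆ (Gc n j.castSucc) := by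
  rw [← Gt_inv_mul_Gd_mul_Gt, Gd_eq, boundaryTwist_apply]

end Relations

/-- Indices of the free basis `aⱼ, bⱼ, tⱼ, cᵢ` of `Gₙ`; `c` stands for `cᵢ`, where `i` is the
parameter of `GFreeGen.basis`. -/
inductive GFreeGen (n : ℕ)
  | a (j : Fin (n + 1))
  | b (j : Fin (n + 1))
  | t (j : Fin n)
  | c

namespace GFreeGen

variable (n : ℕ) (i : Fin (n + 1))

def step (j : Fin n) : Equiv.Perm (FreeGroup (GFreeGen n)) :=
  boundaryTwist (FreeGroup.of (t j)) ⁅FreeGroup.of (a j.castSucc), FreeGroup.of (b j.castSucc)⁆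

def cWord : Fin (n + 1) → FreeGroup (GFreeGen n) :=
  permSeq (step n) i (FreeGroup.of c)

-- Typed on the unfolding of `GGen n`, which is how the relators of `GRels n` are typed.
def genImage : (Fin (n + 1) × Fin 4) ⊕ Fin n → FreeGroup (GFreeGen n)
  | .inl (j, 0) => FreeGroup.of (a j)
  | .inl (j, 1) => FreeGroup.of (b j)
  | .inl (j, 2) => cWord n i j
  | .inl (j, 3) => (⁅FreeGroup.of (a j), FreeGroup.of (b j)⁆ * cWord n i j)⁻¹
  | .inr j => FreeGroup.of (t j)

def toFree : GGrp n →* FreeGroup (GFreeGen n) :=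
  PresentedGroup.toGroup (f := genImage n i) <| by
    rintro r (⟨j, rfl⟩ | ⟨j, rfl⟩)
    · simp only [map_mul, map_commutatorElement, FreeGroup.lift_apply_of, genImage]
      group
    · simp only [map_mul, map_inv, FreeGroup.lift_apply_of, genImage, cWord, permSeq_succ,
        step, boundaryTwist_apply]
      group

def ofFree : FreeGroup (GFreeGen n) →* GGrp n :=
  FreeGroup.lift fun
    | a j => Ga n j
    | b j => Gb n j
    | t j => Gt n j
    | c => Gc n i

theorem ofFree_cWord (j : Fin (n + 1)) : ofFree n i (cWord n i j) = Gc n j := by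
  rw [cWord, map_permSeq (h := ofFree n i)
    (g := fun j => boundaryTwist (Gt n j) ⁅Ga n j.castSucc, Gb n j.castSucc⁆)
    (fun j x => by simp [step, map_boundaryTwist, ofFree]), eq_permSeq (Gc_succ n) i]
  simp [ofFree]

theorem toFree_of (x : GGen n) : toFree n i (PresentedGroup.of x) = genImage n i x :=
  PresentedGroup.toGroup.of _

theorem ofFree_comp_toFree : (ofFree n i).comp (toFree n i) = MonoidHom.id _ := by
  refine PresentedGroup.ext fun x => ?_
  rw [MonoidHom.comp_apply, toFree_of, MonoidHom.id_apply]
  rcases x with ⟨j, k⟩ | j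
  · fin_cases k
    · rfl
    · rfl
    · exact ofFree_cWord n i j
    · show ofFree n i (⁅_, _⁆ * cWord n i j)⁻¹ = Gd n j
      rw [Gd_eq, map_inv, map_mul, ofFree_cWord, map_commutatorElement]
      rfl
  · rfl

theorem toFree_comp_ofFree : (toFree n i).comp (ofFree n i) = MonoidHom.id _ := by
  refine FreeGroup.ext_hom _ _ fun x => ?_
  rw [MonoidHom.comp_apply, MonoidHom.id_apply]
  cases x
  case c => exact (toFree_of n i _).trans (permSeq_self _ _)
  all_goals exact toFree_of n i _

def basis : FreeGroupBasis (GFreeGen n) (GGrp n) :=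
  .ofRepr (MonoidHom.toMulEquiv _ _ (ofFree_comp_toFree n i) (toFree_comp_ofFree n i))

theorem basis_apply (x : GFreeGen n) : basis n i x = ofFree n i (FreeGroup.of x) := rfl

end GFreeGen

theorem Hsub_eq_closure (n : ℕ) (i : Fin (n + 1)) :
    Hsub n i = closure {Ga n i, Gb n i, Gc n i} := by
  refine le_antisymm (closure_le _ |>.mpr ?_) (closure_mono (by intro; simp; tauto))
  have ha : Ga n i ∈ closure {Ga n i, Gb n i, Gc n i} := subset_closure (by simp)
  have hb : Gb n i ∈ closure {Ga n i, Gb n i, Gc n i} := subset_closure (by simp)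
  have hc : Gc n i ∈ closure {Ga n i, Gb n i, Gc n i} := subset_closure (by simp)
  have hd : Gd n i ∈ closure {Ga n i, Gb n i, Gc n i} := by
    rw [Gd_eq, commutatorElement_def]
    exact inv_mem (mul_mem (mul_mem (mul_mem (mul_mem ha hb) (inv_mem ha)) (inv_mem hb)) hc)
  rintro _ (rfl | rfl | rfl | rfl)
  exacts [ha, hb, hc, hd]

/-- For each `0 ≤ i ≤ n`, the subgroup `Hᵢ` is a free factor of `Gₙ`. -/
theorem Hsub_isFreeFactor (n : ℕ) (i : Fin (n + 1)) : IsFreeFactor (Hsub n i) := by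
  have hH : Hsub n i = closure (GFreeGen.basis n i '' {.a i, .b i, .c}) := by
    simp [Hsub_eq_closure, Set.image_insert_eq, GFreeGen.basis_apply, GFreeGen.ofFree]
  exact ⟨_, hH ▸ (GFreeGen.basis n i).isFreeProd_closure_image _⟩
end

section
/- For each 0 ≤ i ≤ n, the subgroup G_i is a free factor of G_n, with a complement that is free of rank 3(n-i). -/
open scoped commutatorElement

/-- The canonical copy of `Gᵢ` inside `Gₙ`, generated by `aₖ, bₖ, cₖ, dₖ` for `k ≤ i`
and `tⱼ` for `j < i`. -/
def Gsub (n : ℕ) (i : Fin (n + 1)) : Subgroup (GGrp n) :=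
  Subgroup.closure
    ({x | ∃ k : Fin (n + 1), k ≤ i ∧ (x = Ga n k ∨ x = Gb n k ∨ x = Gc n k ∨ x = Gd n k)} ∪
     {x | ∃ j : Fin n, (j : ℕ) < (i : ℕ) ∧ x = Gt n j})

/-!
The relation `cₖ dₖ [aₖ, bₖ] = 1` solves for `dₖ`, and `tⱼ⁻¹ dⱼ tⱼ = c_{j+1}` solves for `c_{j+1}`,
so by Tietze transformations `Gₙ` is free on `aₖ, bₖ` (`k ≤ n`), `c₀` and `tⱼ` (`j < n`).
Give `aₖ, bₖ` level `k`, `c₀` level `0` and `tⱼ` level `j + 1`. Then `Gᵢ` is generated by the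
basis elements of level `≤ i`, and a subset of a free basis generates a free factor whose
complement is generated by the other basis elements, here `3 (n - i)` of them.
-/

open Monoid Subgroup

theorem IsFreeProd.of_mulEquiv {G M N : Type*} [Group G] [Group M] [Group N]
    (e : Coprod M N ≃* G) :
    IsFreeProd (e.toMonoidHom.comp Coprod.inl).range (e.toMonoidHom.comp Coprod.inr).range := by
  set c := MulEquiv.coprodCongr
    (MonoidHom.ofInjective (f := e.toMonoidHom.comp Coprod.inl)
      (e.injective.comp Coprod.inl_injective))
    (MonoidHom.ofInjective (f := e.toMonoidHom.comp Coprod.inr)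
      (e.injective.comp Coprod.inr_injective))
  have hc : (Coprod.lift (e.toMonoidHom.comp Coprod.inl).range.subtype
      (e.toMonoidHom.comp Coprod.inr).range.subtype).comp (c : Coprod M N →* _) = e :=
    Coprod.hom_ext rfl rfl
  refine (Function.Bijective.of_comp_iff _ c.bijective).mp ?_
  rw [← MonoidHom.coe_coe c, ← MonoidHom.coe_comp, hc]
  exact e.bijective

open scoped Classical in
noncomputable def FreeGroup.coprodComplEquiv {α : Type*} (s : Set α) :
    Coprod (FreeGroup s) (FreeGroup ↥sᶜ) ≃* FreeGroup α :=
  MonoidHom.toMulEquiv (Coprod.lift (FreeGroup.map (↑)) (FreeGroup.map (↑)))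
    (FreeGroup.lift fun x =>
      if h : x ∈ s then Coprod.inl (FreeGroup.of ⟨x, h⟩) else Coprod.inr (FreeGroup.of ⟨x, h⟩))
    (Coprod.hom_ext (FreeGroup.ext_hom _ _ fun x => by simp [x.2])
      (FreeGroup.ext_hom _ _ fun x => by simp [show (x : α) ∉ s from x.2]))
    (FreeGroup.ext_hom _ _ fun x => by by_cases h : x ∈ s <;> simp [h])

namespace FreeGroupBasis

variable {ι G : Type*} [Group G] (b : FreeGroupBasis ι G)

theorem range_comp_map_subtype (s : Set ι) :
    (b.repr.symm.toMonoidHom.comp (FreeGroup.map ((↑) : s → ι))).range = closure (b '' s) := by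
  rw [MonoidHom.range_comp, FreeGroup.range_map, MonoidHom.map_closure, Subtype.range_coe,
    ← Set.image_comp]
  rfl

theorem isFreeProd_closure_image_compl (s : Set ι) :
    IsFreeProd (closure (b '' s)) (closure (b '' sᶜ)) := by
  rw [← b.range_comp_map_subtype, ← b.range_comp_map_subtype]
  exact IsFreeProd.of_mulEquiv ((FreeGroup.coprodComplEquiv s).trans b.repr.symm)

noncomputable def closureImageEquiv (s : Set ι) : closure (b '' s) ≃* FreeGroup s :=
  ((MonoidHom.ofInjective (b.repr.symm.injective.comp
    (FreeGroup.map_injective Subtype.val_injective))).trans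
      (MulEquiv.subgroupCongr (b.range_comp_map_subtype s))).symm

end FreeGroupBasis

namespace GGrp

variable (n : ℕ)

/-- `(k, 0)` and `(k, 1)` index `aₖ` and `bₖ`; `(0, 2)` indexes `c₀` and `(j + 1, 2)` indexes `tⱼ`,
so the first coordinate is the level. -/
abbrev BasisIndex : Type := Fin (n + 1) × Fin 3

def basisElem : BasisIndex n → GGrp n
  | (k, m) => ![Ga n k, Gb n k, (Fin.cons (Gc n 0) (Gt n) : Fin (n + 1) → GGrp n) k] m

variable {n}

theorem Gd_eq (k : Fin (n + 1)) : Gd n k = (Gc n k)⁻¹ * ⁅Ga n k, Gb n k⁆⁻¹ :=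
  eq_inv_mul_iff_mul_eq.mpr <| eq_inv_of_mul_eq_one_left <|
    PresentedGroup.one_of_mem (Or.inl ⟨k, rfl⟩)

theorem Gc_succ (j : Fin n) : Gc n j.succ = (Gt n j)⁻¹ * Gd n j.castSucc * Gt n j :=
  (mul_inv_eq_one.mp <| PresentedGroup.one_of_mem (Or.inr ⟨j, rfl⟩)).symm

section Lift

variable {H K : Type*} [Group H] [Group K] (f : BasisIndex n → H)

def cImage : Fin (n + 1) → H :=
  Fin.induction (f (0, 2)) fun j c =>
    (f (j.succ, 2))⁻¹ * (c⁻¹ * ⁅f (j.castSucc, 0), f (j.castSucc, 1)⁆⁻¹) * f (j.succ, 2)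

@[simp] theorem cImage_succ (j : Fin n) : cImage f j.succ =
    (f (j.succ, 2))⁻¹ * ((cImage f j.castSucc)⁻¹ * ⁅f (j.castSucc, 0), f (j.castSucc, 1)⁆⁻¹) *
      f (j.succ, 2) := rfl

def dImage (k : Fin (n + 1)) : H := (cImage f k)⁻¹ * ⁅f (k, 0), f (k, 1)⁆⁻¹

-- Stated on the unfolding of `GGen n`, the type at which the relators of `GRels n` elaborate,
-- so that `simp` can evaluate `FreeGroup.lift (genImage f)` on them.
def genImage : (Fin (n + 1) × Fin 4) ⊕ Fin n → H
  | .inl (k, m) => ![f (k, 0), f (k, 1), cImage f k, dImage f k] m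
  | .inr j => f (j.succ, 2)

theorem lift_genImage_eq_one : ∀ r ∈ GRels n, FreeGroup.lift (genImage f) r = 1 := by
  rintro r (⟨k, rfl⟩ | ⟨j, rfl⟩) <;> simp [genImage, dImage, mul_assoc, -commutatorElement_inv]

def lift : GGrp n →* H := PresentedGroup.toGroup (lift_genImage_eq_one f)

theorem lift_of (g : GGen n) : lift f (PresentedGroup.of g) = genImage f g :=
  PresentedGroup.toGroup.of _

theorem lift_basisElem (x : BasisIndex n) : lift f (basisElem n x) = f x := by
  obtain ⟨k, m⟩ := x
  fin_cases m
  · exact lift_of f (Sum.inl (k, 0))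
  · exact lift_of f (Sum.inl (k, 1))
  · cases k using Fin.cases with
    | zero => exact lift_of f (Sum.inl (0, 2))
    | succ j => exact lift_of f (Sum.inr j)

theorem map_cImage (φ : H →* K) (k : Fin (n + 1)) : φ (cImage f k) = cImage (φ ∘ f) k := by
  induction k using Fin.induction with
  | zero => rfl
  | succ j ih => simp [ih]

theorem map_genImage (φ : H →* K) (g : (Fin (n + 1) × Fin 4) ⊕ Fin n) :
    φ (genImage f g) = genImage (φ ∘ f) g := by
  rcases g with ⟨k, m⟩ | j
  · fin_cases m <;> simp [genImage, dImage, map_cImage]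
  · rfl

end Lift

theorem cImage_basisElem (k : Fin (n + 1)) : cImage (basisElem n) k = Gc n k := by
  induction k using Fin.induction with
  | zero => rfl
  | succ j ih => simp [ih, basisElem, Gc_succ, Gd_eq]

theorem dImage_basisElem (k : Fin (n + 1)) : dImage (basisElem n) k = Gd n k := by
  rw [dImage, cImage_basisElem, Gd_eq]
  rfl

theorem genImage_basisElem (g : (Fin (n + 1) × Fin 4) ⊕ Fin n) :
    genImage (basisElem n) g = PresentedGroup.of g := by
  rcases g with ⟨k, m⟩ | j
  · fin_cases m
    · rfl
    · rfl
    · exact cImage_basisElem k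
    · exact dImage_basisElem k
  · rfl

theorem eq_lift {H : Type*} [Group H] (F : GGrp n →* H) : F = lift (F ∘ basisElem n) :=
  PresentedGroup.ext fun g => calc
    F (.of g) = F (genImage (basisElem n) g) := congrArg F (genImage_basisElem g).symm
    _ = genImage (F ∘ basisElem n) g := map_genImage _ F g
    _ = lift (F ∘ basisElem n) (.of g) := (lift_of _ g).symm

variable (n) in
noncomputable def freeGroupBasis : FreeGroupBasis (BasisIndex n) (GGrp n) :=
  .ofUniqueLift _ (basisElem n) fun f =>
    ⟨lift f, lift_basisElem f, fun F hF => (eq_lift F).trans (congrArg lift (funext hF))⟩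

@[simp] theorem coe_freeGroupBasis : ⇑(freeGroupBasis n) = basisElem n := by
  ext x
  exact FreeGroup.lift_apply_of

theorem Gsub_eq_closure_basisElem (i : Fin (n + 1)) :
    Gsub n i = closure (basisElem n '' {x | x.1 ≤ i}) := by
  set L := closure (basisElem n '' {x | x.1 ≤ i})
  have mem (x : BasisIndex n) (hx : x.1 ≤ i) : basisElem n x ∈ L :=
    Subgroup.subset_closure ⟨x, hx, rfl⟩
  have hGd (k : Fin (n + 1)) (hk : k ≤ i) (hc : Gc n k ∈ L) : Gd n k ∈ L := by
    rw [Gd_eq, commutatorElement_def]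
    apply_rules [mul_mem, inv_mem, mem (k, 0), mem (k, 1)]
  have hGc (k : Fin (n + 1)) (hk : k ≤ i) : Gc n k ∈ L := by
    induction k using Fin.induction with
    | zero => exact mem (0, 2) hk
    | succ j ih =>
      have hj := (Fin.castSucc_le_succ j).trans hk
      rw [Gc_succ]
      apply_rules [mul_mem, inv_mem, mem (j.succ, 2), hGd, ih]
  apply le_antisymm
  · rw [Gsub, closure_le]
    rintro _ (⟨k, hk, rfl | rfl | rfl | rfl⟩ | ⟨j, hj, rfl⟩)
    · exact mem (k, 0) hk
    · exact mem (k, 1) hk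
    · exact hGc k hk
    · exact hGd k hk (hGc k hk)
    · exact mem (j.succ, 2) (Fin.le_def.mpr hj)
  · rw [closure_le]
    rintro _ ⟨⟨k, m⟩, hk, rfl⟩
    apply Subgroup.subset_closure
    fin_cases m
    · exact .inl ⟨k, hk, .inl rfl⟩
    · exact .inl ⟨k, hk, .inr (.inl rfl)⟩
    · cases k using Fin.cases with
      | zero => exact .inl ⟨0, hk, .inr (.inr (.inl rfl))⟩
      | succ j => exact .inr ⟨j, Fin.le_def.mp hk, rfl⟩

theorem card_compl_setOf_fst_le (i : Fin (n + 1)) :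
    Nat.card ↥({x : BasisIndex n | x.1 ≤ i}ᶜ) = 3 * (n - i) := by
  have : ({x : BasisIndex n | x.1 ≤ i}ᶜ) = Set.Ioi i ×ˢ Set.univ := by ext; simp
  rw [this, Nat.card_congr (Equiv.Set.prod _ _), Nat.card_prod, mul_comm]
  simp

end GGrp

/-- For each `0 ≤ i ≤ n`, `Gᵢ` is a free factor of `Gₙ` with a complement
free of rank `3(n - i)`. -/
theorem Gsub_isFreeFactor_with_free_complement (n : ℕ) (i : Fin (n + 1)) :
    ∃ B : Subgroup (GGrp n), IsFreeProd (Gsub n i) B ∧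
      Nonempty (B ≃* FreeGroup (Fin (3 * (n - (i : ℕ))))) := by
  set b := GGrp.freeGroupBasis n
  set s : Set (GGrp.BasisIndex n) := {x | x.1 ≤ i}
  refine ⟨closure (b '' sᶜ), ?_, ⟨?_⟩⟩
  · rw [GGrp.Gsub_eq_closure_basisElem, ← GGrp.coe_freeGroupBasis]
    exact b.isFreeProd_closure_image_compl s
  · exact (b.closureImageEquiv sᶜ).trans <| FreeGroup.freeGroupCongr <|
      (Finite.equivFin _).trans (finCongr (GGrp.card_compl_setOf_fst_le i))
end

section
/- In a free group F of rank 2 with basis {a, b}, every automorphism of F maps the commutator [a,b] to a conjugate of [a,b] or of [a,b]⁻¹. -/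
/-!
Nielsen reduction. Order the elements of `F(a, b)` by length, ties broken by a weight, and replace
one member of a generating pair `(u, v)` by a smaller product `u^{±1} v^{±1}` or `v^{±1} u^{±1}`
as long as possible. Such a move keeps the pair generating and changes `⁅u, v⁆` only by
conjugation and inversion. When no move helps, the images of `a^{±1}, b^{±1}` under `a ↦ u, b ↦ v`
cancel at most half of each other, and the image of the middle letter of a reduced three-letter
word is never cancelled completely: cancelling exactly half on both sides would make one of the
two products lighter. So `a ↦ u, b ↦ v` does not shorten words; since it is onto, `a` and `b` are
images of letters, that is, `u` and `v` are `a^{±1}` and `b^{±1}` in some order.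
-/

open scoped commutatorElement

section NielsenMoves

variable {G : Type*} [Group G] {u v w x y : G}

def IsConjUpToInv (x y : G) : Prop := IsConj x y ∨ IsConj x⁻¹ y

theorem IsConj.inv (h : IsConj x y) : IsConj x⁻¹ y⁻¹ := by
  obtain ⟨c, rfl⟩ := isConj_iff.1 h
  exact isConj_iff.2 ⟨c, by group⟩

namespace IsConjUpToInv

theorem symm (h : IsConjUpToInv x y) : IsConjUpToInv y x :=
  h.imp IsConj.symm fun h => by simpa using h.inv.symm

theorem trans {z : G} (hxy : IsConjUpToInv x y) (hyz : IsConjUpToInv y z) :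
    IsConjUpToInv x z := by
  rcases hxy with hxy | hxy <;> rcases hyz with hyz | hyz
  · exact Or.inl (hxy.trans hyz)
  · exact Or.inr (hxy.inv.trans hyz)
  · exact Or.inr (hxy.trans hyz)
  · exact Or.inl ((by simpa using hxy.inv : IsConj x y⁻¹).trans hyz)

theorem inv_right (h : IsConjUpToInv x y) : IsConjUpToInv x y⁻¹ :=
  h.elim (fun h => Or.inr h.inv) fun h => Or.inl (by simpa using h.inv)

end IsConjUpToInv

theorem isConjUpToInv_commutator_of_mem (hx : x ∈ ({u, u⁻¹} : Set G))
    (hy : y ∈ ({v, v⁻¹} : Set G)) : IsConjUpToInv ⁅u, v⁆ ⁅x, y⁆ := by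
  rcases hx with hx | hx <;> rcases hy with hy | hy <;> subst x y
  · exact Or.inl (IsConj.refl _)
  · exact Or.inr (isConj_iff.2 ⟨v⁻¹, by group⟩)
  · exact Or.inr (isConj_iff.2 ⟨u⁻¹, by group⟩)
  · exact Or.inl (isConj_iff.2 ⟨(v * u)⁻¹, by group⟩)

def nielsenMoves (u v : G) : Set G :=
  {w | ∃ x ∈ ({u, u⁻¹} : Set G), ∃ y ∈ ({v, v⁻¹} : Set G), w = x * y ∨ w = y * x}

theorem nielsenMoves_comm (u v : G) : nielsenMoves u v = nielsenMoves v u := by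
  ext w
  exact ⟨fun ⟨x, hx, y, hy, h⟩ => ⟨y, hy, x, hx, h.symm⟩,
    fun ⟨x, hx, y, hy, h⟩ => ⟨y, hy, x, hx, h.symm⟩⟩

theorem mem_of_mem_pair_inv {H : Subgroup G} (hx : x ∈ ({u, u⁻¹} : Set G)) (hu : u ∈ H) :
    x ∈ H := by
  rcases hx with hx | hx <;> subst x
  exacts [hu, inv_mem hu]

theorem mem_pair_inv_comm : x ∈ ({u, u⁻¹} : Set G) ↔ u ∈ ({x, x⁻¹} : Set G) := by
  constructor <;> rintro (h | h) <;> subst h <;> simp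

theorem closure_pair_eq_of_mem_nielsenMoves (hw : w ∈ nielsenMoves u v) :
    Subgroup.closure {u, w} = Subgroup.closure {u, v} := by
  obtain ⟨x, hx, y, hy, hw⟩ := hw
  have hyw : y = x⁻¹ * w ∨ y = w * x⁻¹ := by
    rcases hw with rfl | rfl <;> simp
  apply le_antisymm <;> rw [Subgroup.closure_le] <;> rintro _ (rfl | rfl)
  · exact Subgroup.subset_closure (by simp)
  · have hxH := mem_of_mem_pair_inv hx (Subgroup.subset_closure (Set.mem_insert u {v}))
    have hyH := mem_of_mem_pair_inv hy
      (Subgroup.subset_closure (Set.mem_insert_of_mem u rfl : v ∈ ({u, v} : Set G)))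
    rcases hw with rfl | rfl
    exacts [mul_mem hxH hyH, mul_mem hyH hxH]
  · exact Subgroup.subset_closure (by simp)
  · have hxH := mem_of_mem_pair_inv hx (Subgroup.subset_closure (Set.mem_insert u {w}))
    have hwH := Subgroup.subset_closure (Set.mem_insert_of_mem u rfl : w ∈ ({u, w} : Set G))
    refine mem_of_mem_pair_inv (mem_pair_inv_comm.1 hy) ?_
    rcases hyw with rfl | rfl
    exacts [mul_mem (inv_mem hxH) hwH, mul_mem hwH (inv_mem hxH)]

theorem isConjUpToInv_commutator_of_mem_nielsenMoves (hw : w ∈ nielsenMoves u v) :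
    IsConjUpToInv ⁅u, v⁆ ⁅u, w⁆ := by
  obtain ⟨x, hx, y, hy, hw⟩ := hw
  have hconj : IsConj ⁅u, y⁆ ⁅u, w⁆ := by
    rcases hx with hx | hx <;> rcases hw with hw | hw <;> subst x w
    exacts [isConj_iff.2 ⟨u, by group⟩, isConj_iff.2 ⟨1, by group⟩,
      isConj_iff.2 ⟨u⁻¹, by group⟩, isConj_iff.2 ⟨1, by group⟩]
  exact (isConjUpToInv_commutator_of_mem (Set.mem_insert u _) hy).trans (Or.inl hconj)

end NielsenMoves

namespace FreeGroup

variable {α β : Type*}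

theorem mk_append_mul_mk_invRev_append (p m q : List (α × Bool)) :
    mk (p ++ m) * mk (invRev m ++ q) = mk (p ++ q) := by
  rw [← mul_mk, ← mul_mk, ← mul_mk, ← inv_mk]
  group

theorem lift_mk_singleton_mem (f : α → FreeGroup β) (z : α × Bool) :
    lift f (mk [z]) ∈ ({f z.1, (f z.1)⁻¹} : Set (FreeGroup β)) := by
  obtain ⟨a, _ | _⟩ := z <;> simp [lift_mk]

theorem lift_mk_singleton_not_eq_inv (f : α → FreeGroup β) (z : α × Bool) :
    lift f (mk [(z.1, !z.2)]) = (lift f (mk [z]))⁻¹ := by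
  obtain ⟨a, _ | _⟩ := z <;> simp [lift_mk]

theorem IsReduced.eq_of_fst_eq {z z' : α × Bool} (h : IsReduced [z, z']) (h₁ : z.1 = z'.1) :
    z = z' :=
  Prod.ext h₁ (List.isChain_pair.1 h h₁)

section WordCode

variable [Fintype α]

theorem one_lt_card_of_ne_nil {L : List (α × Bool)} (hL : L ≠ []) :
    1 < Fintype.card (α × Bool) := by
  obtain ⟨z, -⟩ := List.exists_mem_of_ne_nil L hL
  have := Fintype.card_pos_iff.2 ⟨z.1⟩
  simp only [Fintype.card_prod, Fintype.card_bool]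
  omega

noncomputable def wordCode (L : List (α × Bool)) : ℕ :=
  Nat.ofDigits (Fintype.card (α × Bool)) (L.map fun z => Fintype.equivFin _ z)

theorem lt_card_of_mem_map_equivFin {L : List (α × Bool)} :
    ∀ d ∈ L.map (fun z => (Fintype.equivFin _ z : ℕ)), d < Fintype.card (α × Bool) := by
  intro d hd
  obtain ⟨z, -, rfl⟩ := List.mem_map.1 hd
  exact Fin.isLt _

theorem wordCode_append (L₁ L₂ : List (α × Bool)) :
    wordCode (L₁ ++ L₂) = wordCode L₁ + Fintype.card (α × Bool) ^ L₁.length * wordCode L₂ := by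
  simp [wordCode, Nat.ofDigits_append]

theorem wordCode_lt (L : List (α × Bool)) : wordCode L < Fintype.card (α × Bool) ^ L.length := by
  rcases eq_or_ne L [] with rfl | hL
  · simp [wordCode]
  have := Nat.ofDigits_lt_base_pow_length (one_lt_card_of_ne_nil hL)
    (lt_card_of_mem_map_equivFin (L := L))
  rwa [List.length_map] at this

theorem eq_of_wordCode_eq {L₁ L₂ : List (α × Bool)} (hlen : L₁.length = L₂.length)
    (h : wordCode L₁ = wordCode L₂) : L₁ = L₂ := by
  rcases eq_or_ne L₁ [] with rfl | hL
  · exact (List.eq_nil_of_length_eq_zero hlen.symm).symm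
  exact List.map_injective_iff.2 (Fin.val_injective.comp (Fintype.equivFin _).injective)
    (Nat.ofDigits_inj_of_len_eq (one_lt_card_of_ne_nil hL) (by simpa using hlen)
      lt_card_of_mem_map_equivFin lt_card_of_mem_map_equivFin h)

end WordCode

section ReducedWords

variable [DecidableEq α]

theorem IsReduced.toWord_mk {L : List (α × Bool)} (h : IsReduced L) : (mk L).toWord = L := by
  rw [FreeGroup.toWord_mk, h.reduce_eq]

theorem IsReduced.eq_nil_of_invRev_append_self {m : List (α × Bool)}
    (h : IsReduced (invRev m ++ m)) : m = [] := by
  have := h.reduce_eq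
  rw [reduce_invRev_left_cancel] at this
  exact (List.append_eq_nil_iff.1 this.symm).2

theorem IsReduced.exists_cancel {L₁ L₂ : List (α × Bool)} (h₁ : IsReduced L₁)
    (h₂ : IsReduced L₂) : ∃ p m q, L₁ = p ++ m ∧ L₂ = invRev m ++ q ∧ IsReduced (p ++ q) := by
  induction L₂ generalizing L₁ with
  | nil => exact ⟨L₁, [], [], by simp, by simp [invRev], by simpa using h₁⟩
  | cons a L₂ ih =>
    rcases L₁.eq_nil_or_concat with rfl | ⟨L, b, rfl⟩
    · exact ⟨[], [], a :: L₂, by simp, by simp [invRev], by simpa using h₂⟩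
    rw [List.concat_eq_append] at h₁ ⊢
    by_cases hab : b = (a.1, !a.2)
    · obtain ⟨p, m, q, rfl, rfl, hpq⟩ :=
        ih (L₁ := L) (h₁.infix ⟨[], [b], by simp⟩) (h₂.infix ⟨[a], [], by simp⟩)
      refine ⟨p, m ++ [b], q, by simp, ?_, hpq⟩
      simp [invRev, hab]
    · refine ⟨L ++ [b], [], a :: L₂, by simp, by simp [invRev], ?_⟩
      refine List.isChain_append.2 ⟨h₁, h₂, ?_⟩
      simp only [List.getLast?_append, List.getLast?_singleton, Option.some_or,
        Option.mem_def, Option.some.injEq, List.head?_cons, forall_eq']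
      obtain ⟨a₁, a₂⟩ := a
      obtain ⟨b₁, b₂⟩ := b
      rintro rfl
      cases a₂ <;> cases b₂ <;> simp_all

theorem exists_toWord_mul (x y : FreeGroup α) :
    ∃ p m q, x.toWord = p ++ m ∧ y.toWord = invRev m ++ q ∧ (x * y).toWord = p ++ q := by
  obtain ⟨p, m, q, hx, hy, hpq⟩ := isReduced_toWord.exists_cancel (isReduced_toWord (x := y))
  refine ⟨p, m, q, hx, hy, ?_⟩
  rw [← mk_toWord (x := x), ← mk_toWord (x := y), hx, hy, mk_append_mul_mk_invRev_append,
    hpq.toWord_mk]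

theorem norm_lt_norm_mul_self {y : FreeGroup α} (hy : y ≠ 1) : y.norm < (y * y).norm := by
  -- if `y = c r c⁻¹` with `r` cyclically reduced, then `y * y = c r r c⁻¹`
  have hsq := reduceCyclically.reduce_flatten_replicate_succ (isReduced_toWord (x := y)) 1
  have hy' := reduceCyclically.conj_conjugator_reduceCyclically y.toWord
  simp only [List.replicate, List.flatten_cons, List.flatten_nil, List.append_nil] at hsq
  rw [← toWord_mul] at hsq
  by_contra hle
  have hr : reduceCyclically y.toWord = [] := by
    have h1 := congrArg List.length hsq
    have h2 := congrArg List.length hy'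
    simp only [List.length_append, norm] at h1 h2 hle
    exact List.eq_nil_of_length_eq_zero (by omega)
  rw [hr] at hsq hy'
  simp only [List.append_nil] at hsq hy'
  apply hy
  simpa using toWord_injective (hsq.trans hy')

theorem exists_toWord_mul_of_suffix {P x y : FreeGroup α} {A S R : List (α × Bool)}
    (hP : P.toWord = A ++ R) (hx : x.toWord = S ++ R)
    (hR : x.norm + y.norm < (x * y).norm + 2 * R.length) :
    ∃ R₁ m q, R = R₁ ++ m ∧ R₁ ≠ [] ∧ y.toWord = invRev m ++ q ∧
      (x * y).toWord = S ++ R₁ ++ q ∧ (P * y).toWord = A ++ R₁ ++ q := by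
  obtain ⟨p, m, q, hxw, hyw, hxyw⟩ := exists_toWord_mul x y
  have hlen : m.length < R.length := by
    simp only [norm, hxw, hyw, hxyw, List.length_append, invRev_length] at hR
    omega
  obtain ⟨R₁, rfl⟩ := List.suffix_of_suffix_length_le ⟨p, hxw.symm⟩ ⟨S, hx.symm⟩ hlen.le
  have hR₁ : R₁ ≠ [] := by rintro rfl; simp at hlen
  have hp : p = S ++ R₁ := List.append_cancel_right (by rw [← hxw, hx, List.append_assoc])
  subst hp
  refine ⟨R₁, m, q, rfl, hR₁, hyw, hxyw, ?_⟩
  have hred : IsReduced (A ++ R₁ ++ q) :=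
    IsReduced.append_overlap
      ((isReduced_toWord (x := P)).infix ⟨[], m, by rw [hP]; simp⟩)
      ((isReduced_toWord (x := x * y)).infix ⟨S, [], by rw [hxyw]; simp⟩) hR₁
  rw [← mk_toWord (x := P), ← mk_toWord (x := y), hP, hyw, ← List.append_assoc,
    mk_append_mul_mk_invRev_append, hred.toWord_mk]

section Weight

variable [Fintype α]

/-- A tie-breaking weight, invariant under inversion, in which the last letters of a word
and of its inverse are the most significant. -/
noncomputable def weight (g : FreeGroup α) : ℕ := wordCode g.toWord + wordCode g⁻¹.toWord

theorem weight_inv (g : FreeGroup α) : weight g⁻¹ = weight g := by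
  rw [weight, weight, inv_inv, add_comm]

theorem weight_lt_weight_of_toWord_eq_append {X X' : FreeGroup α} {p m q : List (α × Bool)}
    (hX : X.toWord = p ++ m) (hX' : X'.toWord = p ++ q) (hlen : q.length = m.length)
    (hp : m.length ≤ p.length) (hqm : wordCode q < wordCode m) : weight X' < weight X := by
  have hm : m ≠ [] := by rintro rfl; simp [wordCode] at hqm
  have hinv := wordCode_lt (invRev q)
  have hpow := Nat.pow_le_pow_right (one_lt_card_of_ne_nil hm).le hp
  simp only [weight, toWord_inv, hX, hX', invRev_append, wordCode_append, invRev_length,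
    hlen] at hinv ⊢
  nlinarith

theorem weight_mul_lt_or_weight_mul_lt {X y Z : FreeGroup α} (hy : y ≠ 1)
    (hXy : (X * y).norm = X.norm) (hyZ : (y * Z).norm = Z.norm)
    (hyX : y.norm ≤ X.norm) (hZy : y.norm ≤ Z.norm) :
    weight (X * y) < weight X ∨ weight (y * Z) < weight Z := by
  obtain ⟨p, m, q, hX, hy₁, hXy'⟩ := exists_toWord_mul X y
  obtain ⟨p₂, m₂, q₂, hy₂, hZ, hyZ'⟩ := exists_toWord_mul y Z
  have hy₁₂ := hy₂.symm.trans hy₁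
  have hlen := congrArg List.length hy₁₂
  simp only [norm, hX, hy₁, hXy', hZ, hyZ', List.length_append, invRev_length]
    at hXy hyZ hyX hZy hlen
  obtain ⟨hp₂, hm₂⟩ := List.append_inj hy₁₂ (by simp; omega)
  subst p₂ m₂
  -- `y = m⁻¹ q`: `X * y` replaces the last half `m` of `X` by `q`, and `(y * Z)⁻¹` replaces the
  -- last half `q` of `Z⁻¹` by `m`; these halves carry the most significant digits of the weight.
  rcases lt_trichotomy (wordCode q) (wordCode m) with hlt | heq | hgt
  · exact .inl (weight_lt_weight_of_toWord_eq_append hX hXy' (by omega) (by omega) hlt)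
  · have hqm := eq_of_wordCode_eq (by omega) heq
    subst hqm
    have hq := (hy₁ ▸ isReduced_toWord : IsReduced (invRev q ++ q)).eq_nil_of_invRev_append_self
    exact absurd (toWord_eq_nil_iff.1 (by rw [hy₁, hq]; rfl)) hy
  · right
    rw [← weight_inv Z, ← weight_inv (y * Z)]
    refine weight_lt_weight_of_toWord_eq_append (p := invRev q₂) ?_ ?_ (by omega)
      (by simp; omega) hgt
    · rw [toWord_inv, hZ, invRev_append, invRev_invRev]
    · rw [toWord_inv, hyZ', invRev_append, invRev_invRev]

noncomputable def nielsenKey (g : FreeGroup α) : ℕ ×ₗ ℕ := toLex (g.norm, weight g)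

theorem nielsenKey_inv (g : FreeGroup α) : nielsenKey g⁻¹ = nielsenKey g := by
  rw [nielsenKey, nielsenKey, norm_inv_eq, weight_inv]

theorem norm_le_norm_of_nielsenKey_le {g h : FreeGroup α} (hgh : nielsenKey g ≤ nielsenKey h) :
    g.norm ≤ h.norm := by
  rcases Prod.Lex.toLex_le_toLex.1 hgh with h | ⟨h, -⟩ <;> omega

theorem norm_add_norm_lt_of_nielsenKey_le {X y Z : FreeGroup α} (hy : y ≠ 1)
    (hX : nielsenKey X ≤ nielsenKey (X * y)) (hyX : nielsenKey y ≤ nielsenKey (X * y))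
    (hZ : nielsenKey Z ≤ nielsenKey (y * Z)) (hyZ : nielsenKey y ≤ nielsenKey (y * Z)) :
    X.norm + Z.norm < (X * y).norm + (y * Z).norm := by
  simp only [nielsenKey, Prod.Lex.toLex_le_toLex] at hX hyX hZ hyZ
  by_contra hle
  have hXy : (X * y).norm = X.norm := by omega
  have hyZ' : (y * Z).norm = Z.norm := by omega
  rcases weight_mul_lt_or_weight_mul_lt hy hXy hyZ' (by omega) (by omega) with h | h <;> omega

theorem nielsenKey_eq_of_mem_pair_inv {x u : FreeGroup α}
    (hx : x ∈ ({u, u⁻¹} : Set (FreeGroup α))) : nielsenKey x = nielsenKey u := by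
  rcases hx with hx | hx <;> subst x
  exacts [rfl, nielsenKey_inv _]

end Weight

end ReducedWords

section LengthLemma

variable [DecidableEq β] (f : α → FreeGroup β)

/-- Writing `Y, Y', Y''` for the images of the letters of a reduced word `z z' z''`, the
cancellations in `Y Y'` and in `Y' Y''` do not use up `Y'`: twice their lengths,
`|Y| + |Y'| - |Y Y'|` and `|Y'| + |Y''| - |Y' Y''|`, add up to less than `2 |Y'|`. -/
def MiddleSurvives : Prop :=
  ∀ z z' z'' : α × Bool, IsReduced [z, z', z''] →
    (lift f (mk [z])).norm + (lift f (mk [z''])).norm <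
      (lift f (mk [z]) * lift f (mk [z'])).norm + (lift f (mk [z']) * lift f (mk [z''])).norm

variable {f}

-- `R` is what survives of the image of the last letter `z`, and it outlasts the cancellation
-- against the image of any letter that may follow `z`.
theorem MiddleSurvives.exists_toWord_lift_mk (hf : MiddleSurvives f) (L : List (α × Bool))
    (z : α × Bool) (hL : IsReduced (L ++ [z])) :
    ∃ A R, (lift f (mk (L ++ [z]))).toWord = A ++ R ∧ R <:+ (lift f (mk [z])).toWord ∧
      L.length ≤ A.length ∧ ∀ z', IsReduced [z, z'] →
        (lift f (mk [z])).norm + (lift f (mk [z'])).norm <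
          (lift f (mk [z]) * lift f (mk [z'])).norm + 2 * R.length := by
  induction L using List.reverseRecOn generalizing z with
  | nil =>
    refine ⟨[], (lift f (mk [z])).toWord, rfl, List.suffix_refl _, le_rfl, fun z' hz' => ?_⟩
    have h := hf z z z' (List.isChain_cons_cons.2 ⟨fun _ => rfl, hz'⟩)
    have := norm_mul_le (lift f (mk [z])) (lift f (mk [z]))
    rw [← norm]
    omega
  | append_singleton L z₀ ih =>
    obtain ⟨A, R, hA, ⟨S, hS⟩, hlen, hR⟩ := ih z₀ (hL.infix ⟨[], [z], by simp⟩)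
    have hz₀z : IsReduced [z₀, z] := hL.infix ⟨L, [], by simp⟩
    obtain ⟨R₁, m, q, rfl, hR₁, hyw, hxyw, hPyw⟩ :=
      exists_toWord_mul_of_suffix hA hS.symm (hR z hz₀z)
    refine ⟨A ++ R₁, q, ?_, ⟨invRev m, hyw.symm⟩, ?_, fun z' hz' => ?_⟩
    · rw [← mul_mk, _root_.map_mul, hPyw]
    · have := List.length_pos_iff.2 hR₁
      simp only [List.length_append, List.length_singleton]
      omega
    · have h := hf z₀ z z' (List.isChain_cons_cons.2 ⟨List.isChain_pair.1 hz₀z, hz'⟩)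
      simp only [norm, hyw, hxyw, ← hS, List.length_append, invRev_length] at h ⊢
      omega

theorem MiddleSurvives.norm_le_norm_lift [DecidableEq α] (hf : MiddleSurvives f)
    (g : FreeGroup α) : g.norm ≤ (lift f g).norm := by
  rcases g.toWord.eq_nil_or_concat with hg | ⟨L, z, hg⟩
  · simp [norm, hg]
  rw [List.concat_eq_append] at hg
  obtain ⟨A, R, hAR, -, hlen, hR⟩ :=
    hf.exists_toWord_lift_mk L z (hg ▸ isReduced_toWord)
  have hRpos := hR z (List.isChain_pair.2 fun _ => rfl)
  have := norm_mul_le (lift f (mk [z])) (lift f (mk [z]))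
  have hgn : g.norm = L.length + 1 := by simp [norm, hg]
  rw [hgn, ← mk_toWord (x := g), hg, norm, hAR, List.length_append]
  omega

theorem MiddleSurvives.exists_eq_mk_singleton [DecidableEq α] (hf : MiddleSurvives f)
    {g : FreeGroup α} {b : β} (hg : lift f g = of b) : ∃ z, g = mk [z] := by
  have hle := hf.norm_le_norm_lift g
  rw [hg, norm_of] at hle
  have hne : g ≠ 1 := by
    rintro rfl
    exact of_ne_one b (by simpa using hg.symm)
  obtain ⟨z, hz⟩ := List.length_eq_one_iff.1
    (le_antisymm hle (Nat.one_le_iff_ne_zero.2 (mt norm_eq_zero.1 hne)))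
  exact ⟨z, by rw [← hz, mk_toWord]⟩

theorem middleSurvives_of_nielsenKey_le [Fintype β] (hf : ∀ a, f a ≠ 1)
    (hkey : ∀ z z' : α × Bool, z.1 ≠ z'.1 →
      nielsenKey (lift f (mk [z])) ≤ nielsenKey (lift f (mk [z]) * lift f (mk [z']))) :
    MiddleSurvives f := by
  have hne (z : α × Bool) : lift f (mk [z]) ≠ 1 := by
    rcases lift_mk_singleton_mem f z with h | h <;> rw [h] <;> simpa using hf z.1
  have hkey' (z z' : α × Bool) (h : z.1 ≠ z'.1) :
      nielsenKey (lift f (mk [z'])) ≤ nielsenKey (lift f (mk [z]) * lift f (mk [z'])) := by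
    simpa only [lift_mk_singleton_not_eq_inv, ← mul_inv_rev, nielsenKey_inv] using
      hkey (z'.1, !z'.2) (z.1, !z.2) (Ne.symm h)
  intro z z' z'' h
  have h₁ : IsReduced [z, z'] := h.infix ⟨[], [z''], rfl⟩
  have h₂ : IsReduced [z', z''] := h.infix ⟨[z], [], rfl⟩
  by_cases e₁ : z.1 = z'.1
  · obtain rfl := h₁.eq_of_fst_eq e₁
    have := norm_lt_norm_mul_self (hne z)
    by_cases e₂ : z.1 = z''.1
    · obtain rfl := h₂.eq_of_fst_eq e₂
      omega
    · have := norm_le_norm_of_nielsenKey_le (hkey' _ _ e₂)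
      omega
  by_cases e₂ : z'.1 = z''.1
  · obtain rfl := h₂.eq_of_fst_eq e₂
    have := norm_lt_norm_mul_self (hne z')
    have := norm_le_norm_of_nielsenKey_le (hkey _ _ e₁)
    omega
  exact norm_add_norm_lt_of_nielsenKey_le (hne z') (hkey _ _ e₁) (hkey' _ _ e₁)
    (hkey' _ _ e₂) (hkey _ _ e₂)

end LengthLemma

section RankTwo

open Subgroup

def IsNielsenMinimal (u v : FreeGroup (Fin 2)) : Prop :=
  ∀ w ∈ nielsenMoves u v, nielsenKey u ≤ nielsenKey w ∧ nielsenKey v ≤ nielsenKey w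

theorem ne_one_of_closure_pair_eq_top {u v : FreeGroup (Fin 2)} (h : closure {u, v} = ⊤) :
    v ≠ 1 := by
  rintro rfl
  have hle : closure {u, 1} ≤ zpowers u := by
    rw [closure_le]
    rintro _ (rfl | rfl)
    exacts [mem_zpowers _, one_mem _]
  rw [h, top_le_iff] at hle
  obtain ⟨m, hm⟩ := mem_zpowers_iff.1 (hle ▸ mem_top (of 0))
  obtain ⟨n, hn⟩ := mem_zpowers_iff.1 (hle ▸ mem_top (of 1))
  have hcomm : of (0 : Fin 2) * of 1 = of 1 * of 0 := by
    rw [← hm, ← hn]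
    exact (Commute.refl u).zpow_zpow m n
  exact absurd hcomm (by decide)

theorem IsNielsenMinimal.middleSurvives {u v : FreeGroup (Fin 2)} (hmin : IsNielsenMinimal u v)
    (hu : u ≠ 1) (hv : v ≠ 1) : MiddleSurvives ![u, v] := by
  refine middleSurvives_of_nielsenKey_le (by simp [Fin.forall_fin_two, hu, hv]) ?_
  rintro ⟨i, b⟩ ⟨j, c⟩ hij
  have hx := lift_mk_singleton_mem ![u, v] (i, b)
  have hy := lift_mk_singleton_mem ![u, v] (j, c)
  simp only at hij hx hy ⊢
  fin_cases i <;> fin_cases j <;>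
    simp only [Fin.zero_eta, Fin.mk_one, Matrix.cons_val_zero, Matrix.cons_val_one] at hij hx hy ⊢
  · exact absurd rfl hij
  · rw [nielsenKey_eq_of_mem_pair_inv hx]
    exact (hmin _ ⟨_, hx, _, hy, Or.inl rfl⟩).1
  · rw [nielsenKey_eq_of_mem_pair_inv hx]
    exact (hmin _ ⟨_, hy, _, hx, Or.inr rfl⟩).2
  · exact absurd rfl hij

theorem IsNielsenMinimal.isConjUpToInv_commutator {u v : FreeGroup (Fin 2)}
    (hmin : IsNielsenMinimal u v) (h : closure {u, v} = ⊤) :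
    IsConjUpToInv ⁅of (0 : Fin 2), of 1⁆ ⁅u, v⁆ := by
  have hu : u ≠ 1 := ne_one_of_closure_pair_eq_top (by rwa [Set.pair_comm])
  have hmid := hmin.middleSurvives hu (ne_one_of_closure_pair_eq_top h)
  have hgen (i : Fin 2) :
      u ∈ ({of i, (of i)⁻¹} : Set _) ∨ v ∈ ({of i, (of i)⁻¹} : Set _) := by
    obtain ⟨g, hg⟩ : of i ∈ (lift ![u, v]).range := by
      rw [range_lift_eq_closure, Matrix.range_cons_cons_empty, h]
      exact mem_top _
    obtain ⟨⟨j, b⟩, rfl⟩ := hmid.exists_eq_mk_singleton hg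
    have := lift_mk_singleton_mem ![u, v] (j, b)
    rw [hg, mem_pair_inv_comm] at this
    fin_cases j
    exacts [Or.inl this, Or.inr this]
  have hab (x : FreeGroup (Fin 2)) (h₀ : x ∈ ({of 0, (of 0)⁻¹} : Set _))
      (h₁ : x ∈ ({of 1, (of 1)⁻¹} : Set _)) : False := by
    rcases h₀ with rfl | rfl <;> revert h₁ <;> decide
  rcases hgen 0 with h₀ | h₀ <;> rcases hgen 1 with h₁ | h₁
  · exact (hab u h₀ h₁).elim
  · exact isConjUpToInv_commutator_of_mem h₀ h₁
  · simpa [commutatorElement_inv] using (isConjUpToInv_commutator_of_mem h₀ h₁).inv_right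
  · exact (hab v h₀ h₁).elim

theorem isConjUpToInv_commutator_of_closure_eq_top (u v : FreeGroup (Fin 2))
    (h : closure {u, v} = ⊤) : IsConjUpToInv ⁅of (0 : Fin 2), of 1⁆ ⁅u, v⁆ := by
  by_cases hdec :
      ∃ w ∈ nielsenMoves u v, nielsenKey w < nielsenKey u ∨ nielsenKey w < nielsenKey v
  · obtain ⟨w, hw, hwu | hwv⟩ := hdec
    · rw [nielsenMoves_comm] at hw
      have := isConjUpToInv_commutator_of_closure_eq_top v w
        (by rwa [closure_pair_eq_of_mem_nielsenMoves hw, Set.pair_comm])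
      simpa [commutatorElement_inv] using
        (this.trans (isConjUpToInv_commutator_of_mem_nielsenMoves hw).symm).inv_right
    · have := isConjUpToInv_commutator_of_closure_eq_top u w
        (by rwa [closure_pair_eq_of_mem_nielsenMoves hw])
      exact this.trans (isConjUpToInv_commutator_of_mem_nielsenMoves hw).symm
  · simp only [not_exists, not_and, not_or, not_lt] at hdec
    exact IsNielsenMinimal.isConjUpToInv_commutator hdec h
termination_by (u.norm + v.norm, weight u + weight v)
decreasing_by
  all_goals
    simp only [nielsenKey, Prod.Lex.toLex_lt_toLex] at *
    rw [Prod.lex_def]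
    omega

end RankTwo

end FreeGroup

/-- Nielsen: every automorphism of the free group of rank 2 with basis `{a, b}` maps the
commutator `[a,b]` to a conjugate of `[a,b]` or of `[a,b]⁻¹`. -/
theorem aut_commutator_conj (f : FreeGroup (Fin 2) ≃* FreeGroup (Fin 2)) :
    IsConj ⁅FreeGroup.of (0 : Fin 2), FreeGroup.of (1 : Fin 2)⁆
      (f ⁅FreeGroup.of (0 : Fin 2), FreeGroup.of (1 : Fin 2)⁆) ∨
    IsConj (⁅FreeGroup.of (0 : Fin 2), FreeGroup.of (1 : Fin 2)⁆)⁻¹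
      (f ⁅FreeGroup.of (0 : Fin 2), FreeGroup.of (1 : Fin 2)⁆) := by
  have hf : FreeGroup.lift ![f (FreeGroup.of 0), f (FreeGroup.of 1)] = f.toMonoidHom :=
    FreeGroup.ext_hom _ _ fun i => by fin_cases i <;> simp
  have hgen : Subgroup.closure {f (FreeGroup.of 0), f (FreeGroup.of 1)} = ⊤ := by
    rw [← Matrix.range_cons_cons_empty, ← FreeGroup.range_lift_eq_closure, hf,
      MonoidHom.range_eq_top]
    exact f.surjective
  rw [map_commutatorElement]
  exact FreeGroup.isConjUpToInv_commutator_of_closure_eq_top _ _ hgen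
end

section
/- For n = 2k ≥ 2, the group G_n admits a free product decomposition G_n = S * ⟨t_0⟩ * ... * ⟨t_{n-1}⟩ where S is isomorphic to the fundamental group of an orientable surface of genus n+1 with two boundary components; explicitly S = ⟨c_0, d'_n, a_0, b_0, a'_1, b'_1, ..., a'_n, b'_n | c_0 d'_n [a'_n, b'_n]...[a'_1, b'_1][a_0, b_0] = 1⟩ with d'_n conjugate to d_n in G_n. -/
open scoped commutatorElement

/-- Generators for the surface group `S`: `c₀`, `d'ₙ`, and pairs `a'ᵢ, b'ᵢ` for `0 ≤ i ≤ n`. -/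
def SGen (n : ℕ) : Type := Fin 2 ⊕ (Fin (n + 1) × Bool)

/-- The relation `c₀ d'ₙ [a'ₙ, b'ₙ] ⋯ [a'₁, b'₁] [a₀, b₀] = 1`. -/
def sRel (n : ℕ) : FreeGroup (SGen n) :=
  FreeGroup.of ((Sum.inl 0) : SGen n) * FreeGroup.of ((Sum.inl 1) : SGen n) *
    (((List.finRange (n + 1)).reverse.map fun i =>
      ⁅FreeGroup.of ((Sum.inr (i, true)) : SGen n),
        FreeGroup.of ((Sum.inr (i, false)) : SGen n)⁆).prod)

/-- The fundamental group of an orientable surface of genus `n + 1` with two boundary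
components, with boundary generators `c₀` and `d'ₙ`. -/
abbrev SGrp (n : ℕ) : Type := PresentedGroup ({sRel n} : Set _)

/-- The boundary generator `c₀` of `S`. -/
def Sc (n : ℕ) : SGrp n := PresentedGroup.of ((Sum.inl 0) : SGen n)

/-- The boundary generator `d'ₙ` of `S`. -/
def Sd (n : ℕ) : SGrp n := PresentedGroup.of ((Sum.inl 1) : SGen n)

/-!
Conjugate the `i`-th piece `Hᵢ` by `t₀ ⋯ t_{i-1}` and, for odd `i`, also replace
`(aᵢ, bᵢ, dᵢ)` by `(dᵢ bᵢ dᵢ⁻¹, dᵢ aᵢ dᵢ⁻¹, dᵢ⁻¹)`; call the results `a'ᵢ, b'ᵢ, d'ᵢ`. The relation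
of `Hᵢ` then says `d'ᵢ ⁅a'ᵢ, b'ᵢ⁆ = d'_{i-1}`, where the gluing relation `tⱼ⁻¹ dⱼ tⱼ = c_{j+1}`
identifies the conjugated `cᵢ^{±1}` with `d'_{i-1}`, and `d'_{-1} = c₀⁻¹`. These relations
telescope to the single relator `c₀ d'ₙ ⁅a'ₙ, b'ₙ⁆ ⋯ ⁅a'₀, b'₀⁆` of `S`. Conversely, `d'ᵢ` is the
boundary word `c₀⁻¹ ⁅a'₀, b'₀⁆⁻¹ ⋯ ⁅a'ᵢ, b'ᵢ⁆⁻¹`, and from it, the `a'ᵢ, b'ᵢ` and the `tⱼ` all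
generators of `Gₙ` are recovered. So the two substitutions give mutually inverse homomorphisms
between `S * ⟨t₀, …, t_{n-1}⟩` and `Gₙ`. For even `n` no inversion happens at the last piece,
and `d'ₙ` is a conjugate of `dₙ`.
-/

-- `GGen` and `SGen` are not reducible, so a bare `Sum.inl x` used as a generator is typed only up
-- to unfolding, which `simp` does not see through; these constructors have the intended types.
def GGen.surface {n : ℕ} (i : Fin (n + 1)) (m : Fin 4) : GGen n := .inl (i, m)

def GGen.stable {n : ℕ} (j : Fin n) : GGen n := .inr j

def SGen.boundary {n : ℕ} (k : Fin 2) : SGen n := .inl k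

def SGen.handle {n : ℕ} (i : Fin (n + 1)) (flag : Bool) : SGen n := .inr (i, flag)

namespace SurfaceGluing

section Words

variable {H H' F : Type*} [Group H] [Group H'] [FunLike F H H'] [MonoidHomClass F H H']

-- Odd-numbered pieces are glued in with the opposite orientation: there the handle `(a, b)` is
-- read as `(d b d⁻¹, d a d⁻¹)` and the boundary `d` as `d⁻¹`.
def alt (i : ℕ) (x : H) : H := if Even i then x else x⁻¹

def twist (i : ℕ) (x y d : H) : H := if Even i then x else d * y * d⁻¹

@[simp] lemma map_alt (f : F) (i : ℕ) (x : H) : f (alt i x) = alt i (f x) := by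
  unfold alt; split_ifs <;> simp

@[simp] lemma map_twist (f : F) (i : ℕ) (x y d : H) :
    f (twist i x y d) = twist i (f x) (f y) (f d) := by
  unfold twist; split_ifs <;> simp

lemma alt_add_two (i : ℕ) (x : H) : alt (i + 2) x = alt i x := by
  simp [alt, Nat.even_add]

lemma alt_alt (i : ℕ) (x : H) : alt i (alt i x) = x := by
  unfold alt; split_ifs <;> simp

lemma twist_twist (i : ℕ) (x y d : H) : twist i (twist i x y d) (twist i y x d) d⁻¹ = x := by
  unfold twist; split_ifs <;> group

lemma mul_mul_commutator_eq_one_iff (i : ℕ) (a b c d : H) :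
    c * d * ⁅a, b⁆ = 1 ↔ alt i d * ⁅twist i a b d, twist i b a d⁆ = alt (i + 1) c := by
  have hc : c * d * ⁅a, b⁆ = 1 ↔ c = (d * ⁅a, b⁆)⁻¹ := by
    rw [mul_assoc, mul_eq_one_iff_eq_inv]
  rw [hc]
  rcases Nat.even_or_odd i with hi | hi
  · simp only [alt, twist, if_pos hi, if_neg (Nat.not_even_iff_odd.2 hi.add_one)]
    rw [← inv_eq_iff_eq_inv, eq_comm]
  · simp only [alt, twist, if_neg (Nat.not_even_iff_odd.2 hi), if_pos hi.add_one]
    rw [eq_comm]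
    simp only [commutatorElement_def]
    constructor <;> intro h <;> rw [← h] <;> group

end Words

lemma take_succ_finRange {N : ℕ} (j : Fin N) :
    (List.finRange N).take (j + 1) = (List.finRange N).take j ++ [j] := by
  simp [List.take_add_one]

section Products

variable {H H' F : Type*} [Group H] [Group H'] [FunLike F H H'] [MonoidHomClass F H H'] {N : ℕ}

def pathProd (t : Fin N → H) (i : ℕ) : H := (((List.finRange N).take i).map t).prod

@[simp] lemma pathProd_zero (t : Fin N → H) : pathProd t 0 = 1 := by simp [pathProd]

lemma pathProd_succ (t : Fin N → H) (j : Fin N) : pathProd t (j + 1) = pathProd t j * t j := by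
  simp [pathProd, take_succ_finRange]

lemma pathProd_self (t : Fin N → H) : pathProd t N = ((List.finRange N).map t).prod := by
  rw [pathProd, List.take_of_length_le (by simp)]

lemma map_pathProd (f : F) (t : Fin N → H) (i : ℕ) :
    f (pathProd t i) = pathProd (f ∘ t) i := by
  simp [pathProd, map_list_prod]

/-- The curve that cuts the boundary `c` and the first `m` handles off the surface. -/
def boundaryWord (c : H) (a b : Fin N → H) (m : ℕ) : H :=
  c⁻¹ * pathProd (fun j => ⁅b j, a j⁆) m

@[simp] lemma boundaryWord_zero (c : H) (a b : Fin N → H) : boundaryWord c a b 0 = c⁻¹ := by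
  simp [boundaryWord]

lemma boundaryWord_succ_mul_commutator (c : H) (a b : Fin N → H) (j : Fin N) :
    boundaryWord c a b (j + 1) * ⁅a j, b j⁆ = boundaryWord c a b j := by
  rw [boundaryWord, boundaryWord, pathProd_succ, ← commutatorElement_inv (a j), mul_assoc,
    mul_assoc, inv_mul_cancel, mul_one]

lemma map_boundaryWord (f : F) (c : H) (a b : Fin N → H) (m : ℕ) :
    f (boundaryWord c a b m) = boundaryWord (f c) (f ∘ a) (f ∘ b) m := by
  simp [boundaryWord, map_pathProd, Function.comp_def]

lemma mul_mul_prod_eq_one_iff (c d : H) (a b : Fin N → H) :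
    c * d * ((List.finRange N).reverse.map fun i => ⁅a i, b i⁆).prod = 1 ↔
      d = boundaryWord c a b N := by
  have hprod : ((List.finRange N).reverse.map fun i => ⁅a i, b i⁆).prod =
      ((List.finRange N).map fun i => ⁅b i, a i⁆).prod⁻¹ := by
    simp [List.prod_inv_reverse, List.map_reverse, Function.comp_def]
  rw [hprod, mul_inv_eq_one, boundaryWord, pathProd_self, eq_inv_mul_iff_mul_eq]

end Products

section Gluing

variable {H H' F : Type*} [Group H] [Group H'] [FunLike F H H'] [MonoidHomClass F H H'] {n : ℕ}
  (t : Fin n → H)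

-- `cut*` express the generators `a'ᵢ, b'ᵢ` and the boundaries `d'ᵢ` of `S` through the
-- generators of `Gₙ` (with stable letters `t`); `glue*` invert these formulas.
def cutHandle (x y d : Fin (n + 1) → H) (i : Fin (n + 1)) : H :=
  MulAut.conj (pathProd t i) (twist i (x i) (y i) (d i))

def cutBoundary (d : Fin (n + 1) → H) (i : Fin (n + 1)) : H :=
  MulAut.conj (pathProd t i) (alt i (d i))

def glueHandle (x y d : Fin (n + 1) → H) (i : Fin (n + 1)) : H :=
  twist i ((MulAut.conj (pathProd t i)).symm (x i)) ((MulAut.conj (pathProd t i)).symm (y i))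
    (d i)⁻¹

def glueBoundary (q : Fin (n + 1) → H) (i : Fin (n + 1)) : H :=
  alt i ((MulAut.conj (pathProd t i)).symm (q i))

lemma cutHandle_glueHandle (x y d : Fin (n + 1) → H) (i : Fin (n + 1)) :
    cutHandle t (glueHandle t x y d) (glueHandle t y x d) d i = x i := by
  have h := twist_twist i ((MulAut.conj (pathProd t i)).symm (x i))
    ((MulAut.conj (pathProd t i)).symm (y i)) (d i)⁻¹
  rw [inv_inv] at h
  rw [cutHandle, glueHandle, glueHandle, h, MulEquiv.apply_symm_apply]

lemma glueHandle_cutHandle (x y d : Fin (n + 1) → H) (i : Fin (n + 1)) :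
    glueHandle t (cutHandle t x y d) (cutHandle t y x d) d i = x i := by
  rw [glueHandle, cutHandle, cutHandle, MulEquiv.symm_apply_apply, MulEquiv.symm_apply_apply,
    twist_twist]

lemma cutBoundary_glueBoundary (q : Fin (n + 1) → H) (i : Fin (n + 1)) :
    cutBoundary t (glueBoundary t q) i = q i := by
  rw [cutBoundary, glueBoundary, alt_alt, MulEquiv.apply_symm_apply]

lemma glueBoundary_cutBoundary (d : Fin (n + 1) → H) (i : Fin (n + 1)) :
    glueBoundary t (cutBoundary t d) i = d i := by
  rw [glueBoundary, cutBoundary, MulEquiv.symm_apply_apply, alt_alt]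

lemma mul_mul_commutator_eq_one_iff_cut (c : H) (x y d : Fin (n + 1) → H) (i : Fin (n + 1)) :
    c * d i * ⁅x i, y i⁆ = 1 ↔
      cutBoundary t d i * ⁅cutHandle t x y d i, cutHandle t y x d i⁆ =
        MulAut.conj (pathProd t i) (alt (i + 1) c) := by
  rw [mul_mul_commutator_eq_one_iff i, cutBoundary, cutHandle, cutHandle,
    ← map_commutatorElement, ← map_mul, (MulAut.conj _).injective.eq_iff]

lemma map_cutHandle (f : F) (x y d : Fin (n + 1) → H) (i : Fin (n + 1)) :
    f (cutHandle t x y d i) = cutHandle (f ∘ t) (f ∘ x) (f ∘ y) (f ∘ d) i := by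
  rw [cutHandle, cutHandle, MulAut.conj_apply, MulAut.conj_apply, map_mul, map_mul, map_inv,
    map_twist, map_pathProd]
  rfl

lemma map_cutBoundary (f : F) (d : Fin (n + 1) → H) (i : Fin (n + 1)) :
    f (cutBoundary t d i) = cutBoundary (f ∘ t) (f ∘ d) i := by
  rw [cutBoundary, cutBoundary, MulAut.conj_apply, MulAut.conj_apply, map_mul, map_mul, map_inv,
    map_alt, map_pathProd]
  rfl

lemma map_glueHandle (f : F) (x y d : Fin (n + 1) → H) (i : Fin (n + 1)) :
    f (glueHandle t x y d i) = glueHandle (f ∘ t) (f ∘ x) (f ∘ y) (f ∘ d) i := by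
  rw [glueHandle, glueHandle, map_twist]
  simp only [MulAut.conj_symm_apply, map_mul, map_inv, map_pathProd f, Function.comp_apply]

variable (c : H) (a b : Fin (n + 1) → H)

def gluedD : Fin (n + 1) → H := glueBoundary t fun i => boundaryWord c a b (i + 1)

def gluedC (i : Fin (n + 1)) : H :=
  alt (i + 1) ((MulAut.conj (pathProd t i)).symm (boundaryWord c a b i))

lemma map_gluedD (f : F) (i : Fin (n + 1)) :
    f (gluedD t c a b i) = gluedD (f ∘ t) (f c) (f ∘ a) (f ∘ b) i := by
  rw [gluedD, gluedD, glueBoundary, glueBoundary, map_alt]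
  simp only [MulAut.conj_symm_apply, map_mul, map_inv, map_pathProd f, map_boundaryWord f]

lemma map_gluedC (f : F) (i : Fin (n + 1)) :
    f (gluedC t c a b i) = gluedC (f ∘ t) (f c) (f ∘ a) (f ∘ b) i := by
  rw [gluedC, gluedC, map_alt]
  simp only [MulAut.conj_symm_apply, map_mul, map_inv, map_pathProd f, map_boundaryWord f]

@[simp] lemma gluedC_zero : gluedC t c a b 0 = c := by
  simp only [gluedC, Fin.val_zero, pathProd_zero, boundaryWord_zero, MulAut.conj_symm_apply]
  simp [alt]

lemma gluedC_mul_gluedD_mul_commutator (i : Fin (n + 1)) :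
    gluedC t c a b i * gluedD t c a b i *
      ⁅glueHandle t a b (gluedD t c a b) i, glueHandle t b a (gluedD t c a b) i⁆ = 1 := by
  rw [mul_mul_commutator_eq_one_iff_cut t, cutHandle_glueHandle, cutHandle_glueHandle, gluedD,
    cutBoundary_glueBoundary, gluedC, alt_alt, MulEquiv.apply_symm_apply]
  exact boundaryWord_succ_mul_commutator c a b i

lemma inv_mul_gluedD_mul (j : Fin n) :
    (t j)⁻¹ * gluedD t c a b j.castSucc * t j = gluedC t c a b j.succ := by
  have h := map_alt (MulAut.conj (t j)⁻¹) (j : ℕ)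
    ((MulAut.conj (pathProd t j)).symm (boundaryWord c a b (j + 1)))
  simp only [MulAut.conj_apply, MulAut.conj_symm_apply, inv_inv] at h
  simp only [gluedD, gluedC, glueBoundary, Fin.val_castSucc, Fin.val_succ, alt_add_two,
    pathProd_succ, MulAut.conj_symm_apply, h, mul_inv_rev]
  group

end Gluing

section Presentations

variable {H : Type*} [Group H] {n : ℕ}

lemma forall_mem_GRels {p : FreeGroup (GGen n) → Prop} :
    (∀ r ∈ GRels n, p r) ↔
      (∀ i, p (.of (.surface i 2) * .of (.surface i 3) *
        ⁅FreeGroup.of (GGen.surface i 0), .of (.surface i 1)⁆)) ∧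
      ∀ j, p ((FreeGroup.of (.stable j))⁻¹ * .of (.surface j.castSucc 3) * .of (.stable j) *
        (FreeGroup.of (.surface j.succ 2))⁻¹) :=
  ⟨fun h => ⟨fun i => h _ (Or.inl ⟨i, rfl⟩), fun j => h _ (Or.inr ⟨j, rfl⟩)⟩,
    by rintro ⟨hsurface, hglue⟩ r (⟨i, rfl⟩ | ⟨j, rfl⟩); exacts [hsurface i, hglue j]⟩

def gGenMap (a b c d : Fin (n + 1) → H) (t : Fin n → H) : GGen n → H :=
  Sum.elim (fun p => ![a p.1, b p.1, c p.1, d p.1] p.2) t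

lemma lift_gGenMap_eq_one (a b c d : Fin (n + 1) → H) (t : Fin n → H)
    (hsurface : ∀ i, c i * d i * ⁅a i, b i⁆ = 1)
    (hglue : ∀ j, (t j)⁻¹ * d j.castSucc * t j = c j.succ) :
    ∀ r ∈ GRels n, FreeGroup.lift (gGenMap a b c d t) r = 1 :=
  forall_mem_GRels.2 ⟨fun i => by
      simp only [map_mul, map_commutatorElement, FreeGroup.lift_apply_of]
      exact hsurface i,
    fun j => by
      simp only [map_mul, map_inv, FreeGroup.lift_apply_of, mul_inv_eq_one]
      exact hglue j⟩

def sGenMap (c d : H) (a b : Fin (n + 1) → H) : SGen n → H :=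
  Sum.elim ![c, d] fun p => cond p.2 (a p.1) (b p.1)

lemma lift_sGenMap_sRel_eq_one_iff (c d : H) (a b : Fin (n + 1) → H) :
    FreeGroup.lift (sGenMap c d a b) (sRel n) = 1 ↔ d = boundaryWord c a b (n + 1) := by
  have hsRel : sRel n = .of (.boundary 0) * .of (.boundary 1) *
      ((List.finRange (n + 1)).reverse.map fun i =>
        ⁅FreeGroup.of (SGen.handle i true), .of (.handle i false)⁆).prod := rfl
  rw [← mul_mul_prod_eq_one_iff, hsRel]
  simp only [map_mul, map_list_prod, List.map_map, Function.comp_def, map_commutatorElement,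
    FreeGroup.lift_apply_of]
  rfl

lemma map_sGenMap {H' : Type*} [Group H'] (f : H →* H') (c d : H) (a b : Fin (n + 1) → H)
    (x : SGen n) : f (sGenMap c d a b x) = sGenMap (f c) (f d) (f ∘ a) (f ∘ b) x := by
  rcases x with k | ⟨i, _ | _⟩
  · fin_cases k <;> rfl
  all_goals rfl

variable (t : Fin n → H) (c : H) (a b : Fin (n + 1) → H)

def gluedGen : GGen n → H :=
  gGenMap (glueHandle t a b (gluedD t c a b)) (glueHandle t b a (gluedD t c a b)) (gluedC t c a b)
    (gluedD t c a b) t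

lemma lift_gluedGen_eq_one : ∀ r ∈ GRels n, FreeGroup.lift (gluedGen t c a b) r = 1 :=
  lift_gGenMap_eq_one _ _ _ _ _ (gluedC_mul_gluedD_mul_commutator t c a b)
    (inv_mul_gluedD_mul t c a b)

lemma map_gluedGen {H' : Type*} [Group H'] (f : H →* H') (x : GGen n) :
    f (gluedGen t c a b x) = gluedGen (f ∘ t) (f c) (f ∘ a) (f ∘ b) x := by
  have hD : f ∘ gluedD t c a b = gluedD (f ∘ t) (f c) (f ∘ a) (f ∘ b) :=
    funext fun i => map_gluedD t c a b f i
  rcases x with ⟨i, m⟩ | j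
  · fin_cases m
    · exact (map_glueHandle t f a b _ i).trans (by rw [hD]; rfl)
    · exact (map_glueHandle t f b a _ i).trans (by rw [hD]; rfl)
    · exact map_gluedC t c a b f i
    · exact map_gluedD t c a b f i
  · rfl

end Presentations

abbrev SFree (n : ℕ) : Type := Monoid.Coprod (SGrp n) (FreeGroup (Fin n))

namespace SFree

variable (n : ℕ)

def c : SFree n := .inl (Sc n)

def d : SFree n := .inl (Sd n)

def a (i : Fin (n + 1)) : SFree n := .inl (.of (.handle i true))

def b (i : Fin (n + 1)) : SFree n := .inl (.of (.handle i false))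

def t (j : Fin n) : SFree n := .inr (.of j)

lemma sGenMap_eq_inl_of : sGenMap (c n) (d n) (a n) (b n) = fun x => .inl (.of x) := by
  funext x
  rcases x with k | ⟨i, _ | _⟩
  · fin_cases k <;> rfl
  all_goals rfl

lemma d_eq_boundaryWord : d n = boundaryWord (c n) (a n) (b n) (n + 1) := by
  refine (lift_sGenMap_sRel_eq_one_iff _ _ _ _).1 ?_
  have hlift : FreeGroup.lift (sGenMap (c n) (d n) (a n) (b n)) =
      Monoid.Coprod.inl.comp (PresentedGroup.mk _) := by
    rw [sGenMap_eq_inl_of]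
    exact FreeGroup.ext_hom _ _ fun x => FreeGroup.lift_apply_of
  rw [hlift, MonoidHom.comp_apply, PresentedGroup.one_of_mem (Set.mem_singleton _), map_one]

end SFree

namespace GGrp

variable (n : ℕ)

lemma Gc_mul_Gd_mul_commutator (i : Fin (n + 1)) : Gc n i * Gd n i * ⁅Ga n i, Gb n i⁆ = 1 := by
  have h := (forall_mem_GRels.1 fun _ => PresentedGroup.one_of_mem (rels := GRels n)).1 i
  simp only [map_mul, map_commutatorElement] at h
  exact h

lemma inv_Gt_mul_Gd_mul_Gt (j : Fin n) :
    (Gt n j)⁻¹ * Gd n j.castSucc * Gt n j = Gc n j.succ := by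
  have h := (forall_mem_GRels.1 fun _ => PresentedGroup.one_of_mem (rels := GRels n)).2 j
  simp only [map_mul, map_inv, mul_inv_eq_one] at h
  exact h

def aPrime : Fin (n + 1) → GGrp n := cutHandle (Gt n) (Ga n) (Gb n) (Gd n)

def bPrime : Fin (n + 1) → GGrp n := cutHandle (Gt n) (Gb n) (Ga n) (Gd n)

def dPrime : Fin (n + 1) → GGrp n := cutBoundary (Gt n) (Gd n)

lemma dPrime_mul_commutator (i : Fin (n + 1)) :
    dPrime n i * ⁅aPrime n i, bPrime n i⁆ =
      MulAut.conj (pathProd (Gt n) i) (alt (i + 1) (Gc n i)) :=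
  (mul_mul_commutator_eq_one_iff_cut (Gt n) _ _ _ _ i).1 (Gc_mul_Gd_mul_commutator n i)

lemma dPrime_succ_mul_commutator (j : Fin n) :
    dPrime n j.succ * ⁅aPrime n j.succ, bPrime n j.succ⁆ = dPrime n j.castSucc := by
  rw [dPrime_mul_commutator, ← inv_Gt_mul_Gd_mul_Gt, Fin.val_succ, alt_add_two, pathProd_succ,
    map_mul, MulAut.mul_apply, ← MulAut.conj_symm_apply, ← map_alt, MulEquiv.apply_symm_apply]
  rfl

lemma dPrime_eq_boundaryWord (i : Fin (n + 1)) :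
    dPrime n i = boundaryWord (Gc n 0) (aPrime n) (bPrime n) (i + 1) := by
  induction i using Fin.induction with
  | zero =>
    refine mul_right_cancel (b := ⁅aPrime n 0, bPrime n 0⁆) ?_
    rw [boundaryWord_succ_mul_commutator, dPrime_mul_commutator]
    simp [alt]
  | succ j ih =>
    refine mul_right_cancel (b := ⁅aPrime n j.succ, bPrime n j.succ⁆) ?_
    rw [boundaryWord_succ_mul_commutator, dPrime_succ_mul_commutator, ih]
    rfl

lemma gluedD_eq_Gd : gluedD (Gt n) (Gc n 0) (aPrime n) (bPrime n) = Gd n := by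
  funext i
  rw [gluedD, ← glueBoundary_cutBoundary (Gt n) (Gd n) i]
  congr 1
  funext i
  exact (dPrime_eq_boundaryWord n i).symm

lemma gluedC_eq_Gc : gluedC (Gt n) (Gc n 0) (aPrime n) (bPrime n) = Gc n := by
  funext i
  induction i using Fin.cases with
  | zero => exact gluedC_zero _ _ _ _
  | succ j => rw [← inv_mul_gluedD_mul, gluedD_eq_Gd, inv_Gt_mul_Gd_mul_Gt]

lemma gluedGen_eq_of : gluedGen (Gt n) (Gc n 0) (aPrime n) (bPrime n) = PresentedGroup.of := by
  funext x
  rcases x with ⟨i, m⟩ | j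
  · fin_cases m
    · exact (congrArg (glueHandle _ _ _ · i) (gluedD_eq_Gd n)).trans
        (glueHandle_cutHandle _ _ _ _ i)
    · exact (congrArg (glueHandle _ _ _ · i) (gluedD_eq_Gd n)).trans
        (glueHandle_cutHandle _ _ _ _ i)
    · exact congrFun (gluedC_eq_Gc n) i
    · exact congrFun (gluedD_eq_Gd n) i
  · rfl

lemma isConj_dPrime (i : Fin (n + 1)) (hi : Even (i : ℕ)) : IsConj (Gd n i) (dPrime n i) := by
  rw [isConj_iff, dPrime, cutBoundary, alt, if_pos hi]
  exact ⟨_, rfl⟩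

def toSFree : GGrp n →* SFree n :=
  PresentedGroup.toGroup (lift_gluedGen_eq_one (SFree.t n) (SFree.c n) (SFree.a n) (SFree.b n))

end GGrp

namespace SFree

variable (n : ℕ)

def toGGrp : SFree n →* GGrp n :=
  Monoid.Coprod.lift
    (PresentedGroup.toGroup (f := sGenMap (Gc n 0) (GGrp.dPrime n (Fin.last n)) (GGrp.aPrime n)
      (GGrp.bPrime n)) fun _ hr => by
        rw [Set.mem_singleton_iff.1 hr, lift_sGenMap_sRel_eq_one_iff]
        exact GGrp.dPrime_eq_boundaryWord n (Fin.last n))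
    (FreeGroup.lift (Gt n))

lemma toGGrp_inl_of (x : SGen n) :
    toGGrp n (.inl (.of x)) = sGenMap (Gc n 0) (GGrp.dPrime n (Fin.last n)) (GGrp.aPrime n)
      (GGrp.bPrime n) x :=
  (Monoid.Coprod.lift_apply_inl _ _ _).trans (PresentedGroup.toGroup.of _)

lemma toGGrp_comp_toSFree : (toGGrp n).comp (GGrp.toSFree n) = MonoidHom.id _ := by
  refine PresentedGroup.ext fun x => ?_
  have ht : toGGrp n ∘ t n = Gt n :=
    funext fun j => (Monoid.Coprod.lift_apply_inr _ _ _).trans FreeGroup.lift_apply_of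
  have ha : toGGrp n ∘ a n = GGrp.aPrime n := funext fun i => toGGrp_inl_of n (.handle i true)
  have hb : toGGrp n ∘ b n = GGrp.bPrime n := funext fun i => toGGrp_inl_of n (.handle i false)
  have hc : toGGrp n (c n) = Gc n 0 := toGGrp_inl_of n (.boundary 0)
  rw [MonoidHom.comp_apply, GGrp.toSFree, PresentedGroup.toGroup.of, map_gluedGen, ht, ha, hb, hc,
    GGrp.gluedGen_eq_of]
  rfl

lemma toSFree_comp_toGGrp : (GGrp.toSFree n).comp (toGGrp n) = MonoidHom.id _ := by
  have ht : GGrp.toSFree n ∘ Gt n = t n := funext fun j => PresentedGroup.toGroup.of _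
  set D := gluedD (t n) (c n) (a n) (b n) with hD
  have hd : GGrp.toSFree n ∘ Gd n = D := funext fun i => PresentedGroup.toGroup.of _
  have hga : GGrp.toSFree n ∘ Ga n = glueHandle (t n) (a n) (b n) D :=
    funext fun i => PresentedGroup.toGroup.of _
  have hgb : GGrp.toSFree n ∘ Gb n = glueHandle (t n) (b n) (a n) D :=
    funext fun i => PresentedGroup.toGroup.of _
  have ha : GGrp.toSFree n ∘ GGrp.aPrime n = a n := by
    funext i
    rw [Function.comp_apply, GGrp.aPrime, map_cutHandle, ht, hd, hga, hgb, cutHandle_glueHandle]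
  have hb : GGrp.toSFree n ∘ GGrp.bPrime n = b n := by
    funext i
    rw [Function.comp_apply, GGrp.bPrime, map_cutHandle, ht, hd, hga, hgb, cutHandle_glueHandle]
  have hc : GGrp.toSFree n (Gc n 0) = c n := by
    have h : GGrp.toSFree n (Gc n 0) = gluedC (t n) (c n) (a n) (b n) 0 :=
      PresentedGroup.toGroup.of _
    rw [h, gluedC_zero]
  have hd' : GGrp.toSFree n (GGrp.dPrime n (Fin.last n)) = d n := by
    rw [GGrp.dPrime, map_cutBoundary, ht, hd, hD, gluedD, cutBoundary_glueBoundary,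
      d_eq_boundaryWord]
    rfl
  refine Monoid.Coprod.hom_ext (PresentedGroup.ext fun x => ?_)
    (FreeGroup.ext_hom _ _ fun j => ?_)
  · rw [MonoidHom.comp_apply, MonoidHom.comp_apply, toGGrp_inl_of, map_sGenMap, ha, hb, hc, hd',
      sGenMap_eq_inl_of]
    rfl
  · rw [MonoidHom.comp_apply, MonoidHom.comp_apply, toGGrp, Monoid.Coprod.lift_apply_inr,
      FreeGroup.lift_apply_of]
    exact congrFun ht j

end SFree

def decomposition (n : ℕ) : SFree n ≃* GGrp n :=
  MonoidHom.toMulEquiv (SFree.toGGrp n) (GGrp.toSFree n) (SFree.toSFree_comp_toGGrp n)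
    (SFree.toGGrp_comp_toSFree n)

lemma decomposition_inl_Sc (n : ℕ) : decomposition n (.inl (Sc n)) = Gc n 0 :=
  SFree.toGGrp_inl_of n (.boundary 0)

lemma decomposition_inl_Sd (n : ℕ) :
    decomposition n (.inl (Sd n)) = GGrp.dPrime n (Fin.last n) :=
  SFree.toGGrp_inl_of n (.boundary 1)

lemma decomposition_inr_of (n : ℕ) (j : Fin n) : decomposition n (.inr (.of j)) = Gt n j := by
  change SFree.toGGrp n (.inr (.of j)) = Gt n j
  rw [SFree.toGGrp, Monoid.Coprod.lift_apply_inr, FreeGroup.lift_apply_of]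

end SurfaceGluing

theorem GGrp_surface_decomposition_general (n : ℕ) (he : Even n) :
    ∃ ψ : Monoid.Coprod (SGrp n) (FreeGroup (Fin n)) ≃* GGrp n,
      ψ (Monoid.Coprod.inl (Sc n)) = Gc n 0 ∧
      IsConj (Gd n (Fin.last n)) (ψ (Monoid.Coprod.inl (Sd n))) ∧
      ∀ j : Fin n, ψ (Monoid.Coprod.inr (FreeGroup.of j)) = Gt n j := by
  refine ⟨SurfaceGluing.decomposition n, SurfaceGluing.decomposition_inl_Sc n, ?_,
    SurfaceGluing.decomposition_inr_of n⟩
  rw [SurfaceGluing.decomposition_inl_Sd]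
  exact SurfaceGluing.GGrp.isConj_dPrime n (Fin.last n) he

/-- For even `n ≥ 2`, `Gₙ` decomposes as the free product `S * ⟨t₀⟩ * ⋯ * ⟨t_{n-1}⟩`
where `S` is the above surface group, the boundary generator `c₀` of `S` maps to `c₀`
and the boundary generator `d'ₙ` maps to a conjugate of `dₙ`. -/
theorem GGrp_surface_decomposition (n : ℕ) (hn : 2 ≤ n) (he : Even n) :
    ∃ ψ : Monoid.Coprod (SGrp n) (FreeGroup (Fin n)) ≃* GGrp n,
      ψ (Monoid.Coprod.inl (Sc n)) = Gc n 0 ∧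
      IsConj (Gd n (Fin.last n)) (ψ (Monoid.Coprod.inl (Sd n))) ∧
      ∀ j : Fin n, ψ (Monoid.Coprod.inr (FreeGroup.of j)) = Gt n j :=
  GGrp_surface_decomposition_general n he
end
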